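/- arXiv:0704.2264 — 2 statements merged into one kernel-verified Lean document; each statement's English description precedes it below -/
import Mathlib

section
/- For all odd integers s, t ≥ 3, the chromatic polynomial of X(s,t) has a real root strictly between 1 and 2. (Together with the 3-connectivity and non-bipartiteness of X(s,t), this refutes Jackson's conjecture that a 3-connected graph which is not bipartite of odd order has no chromatic roots in (1,2).) -/
/-- The number of proper colorings of `G` with a palette of `k` colors. -/
noncomputable def numColorings {V : Type} [Fintype V] (G : SimpleGraph V) (k : ℕ) : ℕ :=
  Nat.card {f : V → Fin k // ∀ u v, G.Adj u v → f u ≠ f v}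

/-- `P` is the chromatic polynomial of `G`: for every natural number `k`, evaluating `P`
at `k` gives the number of proper `k`-colorings of `G`. -/
def IsChromaticPolynomial {V : Type} [Fintype V] (G : SimpleGraph V) (P : Polynomial ℝ) : Prop :=
  ∀ k : ℕ, P.eval (k : ℝ) = numColorings G k

/-- The adjacency-generating relation of the graph `X(s,t)`: the vertices `v0, v1, v2, v3, v4`
are `Sum.inl 0, …, Sum.inl 4`, the independent set `S` is `Fin s` (as `Sum.inr (Sum.inl _)`)
and the independent set `T` is `Fin t` (as `Sum.inr (Sum.inr _)`).  The edges are: `v1v2`,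
`v3v4`, every vertex of `S` joined to each of `v0, v1, v3`, and every vertex of `T` joined
to each of `v0, v2, v4`. -/
def XAdj (s t : ℕ) (x y : Fin 5 ⊕ Fin s ⊕ Fin t) : Prop :=
  (x = Sum.inl 1 ∧ y = Sum.inl 2) ∨ (x = Sum.inl 3 ∧ y = Sum.inl 4) ∨
    ((∃ i : Fin s, x = Sum.inr (Sum.inl i)) ∧ (y = Sum.inl 0 ∨ y = Sum.inl 1 ∨ y = Sum.inl 3)) ∨
    ((∃ j : Fin t, x = Sum.inr (Sum.inr j)) ∧ (y = Sum.inl 0 ∨ y = Sum.inl 2 ∨ y = Sum.inl 4))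

/-- The graph `X(s,t)`. -/
def graphX (s t : ℕ) : SimpleGraph (Fin 5 ⊕ Fin s ⊕ Fin t) :=
  SimpleGraph.fromRel (XAdj s t)

/-!
Fix the colours `a, b, c, d, e` of `v0, …, v4`; they must satisfy `b ≠ c` and `d ≠ e`, and then
every vertex of `S` has `k - #{a, b, d}` admissible colours and every vertex of `T` has
`k - #{a, c, e}`. Inclusion–exclusion over the two constraints turns the resulting sum into an
explicit polynomial in `k`, which is therefore `P`. For odd `s, t` its value at `3/2` is
`-(21/32) (2 (1/2)^s - (3/2)^s) (2 (1/2)^t - (3/2)^t) < 0`, while it vanishes at `2` with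
derivative `-2`, so it is positive just below `2`; the intermediate value theorem gives a root
in `(3/2, 2)`.
-/

open Finset Polynomial

section TripleCardSums

variable {α R : Type*} [Fintype α] [DecidableEq α] [CommRing R]

def rowSumSame (x : R) (u : ℕ → R) : R := u 1 + (x - 1) * u 2

def rowSumNe (x : R) (u : ℕ → R) : R := 2 * u 2 + (x - 2) * u 3

def pairSum (x : R) (u : ℕ → R) : R := rowSumSame x u + (x - 1) * rowSumNe x u

def neNeSum (x : R) (u v : ℕ → R) : R :=
  pairSum x u * pairSum x v
    - 2 * (rowSumSame x u * rowSumSame x v + (x - 1) * (rowSumNe x u * rowSumNe x v))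
    + pairSum x (u * v)

lemma sum_ite_eq_else_const (a : α) (y z : R) :
    ∑ b : α, (if b = a then y else z) = y + (Fintype.card α - 1 : R) * z := by
  rw [Fintype.sum_eq_add_sum_compl a, if_pos rfl,
    sum_congr rfl fun b hb => if_neg (mem_compl.1 hb ∘ mem_singleton.2), sum_const,
    card_compl, card_singleton, nsmul_eq_mul, Nat.cast_sub (Fintype.card_pos_iff.2 ⟨a⟩),
    Nat.cast_one]

lemma sum_apply_card_insert (u : ℕ → R) (A : Finset α) :
    ∑ d : α, u (insert d A).card = #A * u #A + (Fintype.card α - #A : R) * u (#A + 1) := by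
  have hin : ∀ d ∈ A, u (insert d A).card = u #A := fun d hd => by rw [insert_eq_of_mem hd]
  have hout : ∀ d ∈ Aᶜ, u (insert d A).card = u (#A + 1) := fun d hd => by
    rw [card_insert_of_notMem (mem_compl.1 hd)]
  rw [← sum_add_sum_compl A, sum_congr rfl hin, sum_congr rfl hout, sum_const, sum_const,
    card_compl, nsmul_eq_mul, nsmul_eq_mul, Nat.cast_sub (card_le_univ A)]

lemma sum_apply_card_triple (u : ℕ → R) (a b : α) :
    ∑ d : α, u #{a, b, d} =
      if b = a then rowSumSame (Fintype.card α : R) u else rowSumNe (Fintype.card α : R) u := by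
  have hperm : ∀ d : α, ({a, b, d} : Finset α) = insert d {a, b} := fun d => by
    ext; simp only [mem_insert, mem_singleton]; tauto
  simp only [hperm, sum_apply_card_insert]
  split_ifs with hab
  · simp [hab, rowSumSame]
  · rw [card_pair (Ne.symm hab), rowSumNe]
    push_cast
    ring

lemma sum_sum_apply_card_triple (u : ℕ → R) (a : α) :
    ∑ b : α, ∑ d : α, u #{a, b, d} = pairSum (Fintype.card α : R) u := by
  simp only [sum_apply_card_triple, sum_ite_eq_else_const, pairSum]

lemma sum_mul_sum_apply_card_triple (u v : ℕ → R) (a : α) :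
    ∑ b : α, (∑ d : α, u #{a, b, d}) * (∑ e : α, v #{a, b, e}) =
      rowSumSame (Fintype.card α : R) u * rowSumSame (Fintype.card α : R) v +
        (Fintype.card α - 1 : R) *
          (rowSumNe (Fintype.card α : R) u * rowSumNe (Fintype.card α : R) v) := by
  rw [← sum_ite_eq_else_const a]
  refine sum_congr rfl fun b _ => ?_
  simp only [sum_apply_card_triple]
  split_ifs <;> rfl

lemma sum_ite_ne_and_ne_mul (F G : α → α → R) :
    ∑ b : α, ∑ c : α, ∑ d : α, ∑ e : α, (if b ≠ c ∧ d ≠ e then F b d * G c e else 0) =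
      (∑ b, ∑ d, F b d) * (∑ c, ∑ e, G c e) - ∑ b, (∑ d, F b d) * (∑ e, G b e)
        - ∑ d, (∑ b, F b d) * (∑ c, G c d) + ∑ b, ∑ d, F b d * G b d := by
  have hsplit : ∀ b c d e, (if b ≠ c ∧ d ≠ e then F b d * G c e else 0) =
      F b d * G c e - (if b = c then F b d * G c e else 0)
        - (if d = e then F b d * G c e else 0) + (if b = c ∧ d = e then F b d * G c e else 0) :=
    fun b c d e => by by_cases hbc : b = c <;> by_cases hde : d = e <;> simp [hbc, hde]
  have hall : ∑ b : α, ∑ c : α, ∑ d : α, ∑ e : α, F b d * G c e =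
      (∑ b, ∑ d, F b d) * (∑ c, ∑ e, G c e) := by
    simp only [sum_mul_sum]
  have hrow : ∑ b : α, ∑ c : α, ∑ d : α, ∑ e : α, (if b = c then F b d * G c e else 0) =
      ∑ b, (∑ d, F b d) * (∑ e, G b e) := by
    simp only [sum_ite_irrel, sum_const_zero, sum_ite_eq, mem_univ, if_true, sum_mul_sum]
  have hcol : ∑ b : α, ∑ c : α, ∑ d : α, ∑ e : α, (if d = e then F b d * G c e else 0) =
      ∑ d, (∑ b, F b d) * (∑ c, G c d) := by
    simp only [sum_ite_eq, mem_univ, if_true, sum_mul_sum]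
    conv_rhs => rw [sum_comm]
    exact sum_congr rfl fun b _ => sum_comm
  have hdiag : ∑ b : α, ∑ c : α, ∑ d : α, ∑ e : α,
      (if b = c ∧ d = e then F b d * G c e else 0) = ∑ b, ∑ d, F b d * G b d := by
    simp only [ite_and, sum_ite_irrel, sum_const_zero, sum_ite_eq, mem_univ, if_true]
  simp only [hsplit, sum_add_distrib, sum_sub_distrib, hall, hrow, hcol, hdiag]

lemma sum_ite_ne_and_ne_card_triple (u v : ℕ → R) (a : α) :
    ∑ b : α, ∑ c : α, ∑ d : α, ∑ e : α,
        (if b ≠ c ∧ d ≠ e then u #{a, b, d} * v #{a, c, e} else 0) =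
      neNeSum (Fintype.card α : R) u v := by
  have hcol : ∀ (w : ℕ → R) (d : α), ∑ b, w #{a, b, d} = ∑ b, w #{a, d, b} :=
    fun w d => sum_congr rfl fun b _ => by rw [pair_comm]
  have hdiag := sum_sum_apply_card_triple (u * v) a
  simp only [Pi.mul_apply] at hdiag
  rw [sum_ite_ne_and_ne_mul (fun b d => u #{a, b, d}) (fun c e => v #{a, c, e})]
  simp only [hcol u, hcol v, sum_sum_apply_card_triple, sum_mul_sum_apply_card_triple, hdiag,
    neNeSum]
  ring

end TripleCardSums

lemma forall_fromRel_adj_imp_ne_iff {V β : Type*} (r : V → V → Prop) (f : V → β) :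
    (∀ u v, (SimpleGraph.fromRel r).Adj u v → f u ≠ f v) ↔ ∀ u v, r u v → u ≠ v → f u ≠ f v := by
  simp only [SimpleGraph.fromRel_adj]
  refine ⟨fun h u v huv hne => h u v ⟨hne, .inl huv⟩, ?_⟩
  rintro h u v ⟨hne, huv | hvu⟩
  · exact h u v huv hne
  · exact (h v u hvu hne.symm).symm

lemma graphX_proper_iff {s t k : ℕ} (f : Fin 5 ⊕ Fin s ⊕ Fin t → Fin k) :
    (∀ u v, (graphX s t).Adj u v → f u ≠ f v) ↔
      f (.inl 1) ≠ f (.inl 2) ∧ f (.inl 3) ≠ f (.inl 4) ∧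
        (∀ i, f (.inr (.inl i)) ∉ ({f (.inl 0), f (.inl 1), f (.inl 3)} : Finset (Fin k))) ∧
        (∀ j, f (.inr (.inr j)) ∉ ({f (.inl 0), f (.inl 2), f (.inl 4)} : Finset (Fin k))) := by
  rw [graphX, forall_fromRel_adj_imp_ne_iff]
  simp [XAdj, or_imp, forall_and]

/-- `a, b, c, d, e` are the colours of `v0, …, v4`. -/
abbrev GraphXFiber (s t k : ℕ) (a b c d e : Fin k) : Type :=
  PLift (b ≠ c ∧ d ≠ e) × (Fin s → ↥({a, b, d} : Finset (Fin k))ᶜ) ×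
    (Fin t → ↥({a, c, e} : Finset (Fin k))ᶜ)

def graphXColoringEquiv (s t k : ℕ) :
    {f : Fin 5 ⊕ Fin s ⊕ Fin t → Fin k // ∀ u v, (graphX s t).Adj u v → f u ≠ f v} ≃
      Σ g : Fin k × Fin k × Fin k × Fin k × Fin k,
        GraphXFiber s t k g.1 g.2.1 g.2.2.1 g.2.2.2.1 g.2.2.2.2 where
  toFun f :=
    have hf := (graphX_proper_iff f.1).1 f.2
    ⟨(f.1 (.inl 0), f.1 (.inl 1), f.1 (.inl 2), f.1 (.inl 3), f.1 (.inl 4)),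
      .up ⟨hf.1, hf.2.1⟩, fun i => ⟨f.1 (.inr (.inl i)), mem_compl.2 (hf.2.2.1 i)⟩,
      fun j => ⟨f.1 (.inr (.inr j)), mem_compl.2 (hf.2.2.2 j)⟩⟩
  invFun x :=
    ⟨Sum.elim ![x.1.1, x.1.2.1, x.1.2.2.1, x.1.2.2.2.1, x.1.2.2.2.2]
        (Sum.elim (fun i => x.2.2.1 i) fun j => x.2.2.2 j),
      (graphX_proper_iff _).2 ⟨x.2.1.down.1, x.2.1.down.2,
        fun i => mem_compl.1 (x.2.2.1 i).2, fun j => mem_compl.1 (x.2.2.2 j).2⟩⟩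
  left_inv f := by
    ext (v | i | j)
    · fin_cases v <;> rfl
    all_goals rfl
  right_inv x := rfl

lemma card_graphXFiber {s t k : ℕ} (a b c d e : Fin k) :
    Nat.card (GraphXFiber s t k a b c d e) =
      if b ≠ c ∧ d ≠ e then (k - #{a, b, d}) ^ s * (k - #{a, c, e}) ^ t else 0 := by
  split_ifs with h
  · have : Unique (PLift (b ≠ c ∧ d ≠ e)) := ⟨⟨.up h⟩, fun _ => rfl⟩
    rw [Nat.card_prod, Nat.card_prod, Nat.card_unique, one_mul, Nat.card_fun, Nat.card_fun]
    simp only [Nat.card_eq_fintype_card, Fintype.card_coe, card_compl, Fintype.card_fin]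
  · have : IsEmpty (PLift (b ≠ c ∧ d ≠ e)) := ⟨fun p => h p.down⟩
    simp

lemma numColorings_graphX (s t k : ℕ) :
    numColorings (graphX s t) k =
      ∑ a : Fin k, ∑ b : Fin k, ∑ c : Fin k, ∑ d : Fin k, ∑ e : Fin k,
        if b ≠ c ∧ d ≠ e then (k - #{a, b, d}) ^ s * (k - #{a, c, e}) ^ t else 0 := by
  rw [numColorings, Nat.card_congr (graphXColoringEquiv s t k)]
  simp only [Nat.card_sigma, card_graphXFiber, Fintype.sum_prod_type]

def chromaticX {R : Type*} [CommRing R] (s t : ℕ) (x : R) : R :=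
  x * neNeSum x (fun m : ℕ => (x - m) ^ s) (fun m : ℕ => (x - m) ^ t)

lemma numColorings_graphX_eq_chromaticX (s t k : ℕ) :
    (numColorings (graphX s t) k : ℝ) = chromaticX s t (k : ℝ) := by
  have hcast : ∀ A : Finset (Fin k), ((k - #A : ℕ) : ℝ) = k - #A :=
    fun A => Nat.cast_sub (by simpa using card_le_univ A)
  rw [numColorings_graphX]
  push_cast [apply_ite (Nat.cast (R := ℝ)), hcast]
  simp only [sum_ite_ne_and_ne_card_triple (fun m : ℕ => ((k : ℝ) - m) ^ s)
    (fun m : ℕ => ((k : ℝ) - m) ^ t), sum_const, card_univ, Fintype.card_fin, nsmul_eq_mul,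
    chromaticX]

lemma eval_chromaticX {R : Type*} [CommRing R] (s t : ℕ) (x : R) :
    (chromaticX s t (X : R[X])).eval x = chromaticX s t x := by
  simp [chromaticX, neNeSum, pairSum, rowSumSame, rowSumNe]

lemma IsChromaticPolynomial.eq_chromaticX {s t : ℕ} {P : ℝ[X]}
    (hP : IsChromaticPolynomial (graphX s t) P) : P = chromaticX s t X := by
  refine eq_of_infinite_eval_eq _ _ (Set.infinite_of_injective_forall_mem Nat.cast_injective ?_)
  intro k
  simp only [Set.mem_ofPred_eq, hP k, eval_chromaticX, numColorings_graphX_eq_chromaticX]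

lemma chromaticX_three_halves {s t : ℕ} (hs : Odd s) (ht : Odd t) :
    chromaticX s t (3 / 2 : ℝ) =
      -(21 / 32) * (2 * (1 / 2) ^ s - (3 / 2) ^ s) * (2 * (1 / 2) ^ t - (3 / 2) ^ t) := by
  simp only [chromaticX, neNeSum, pairSum, rowSumSame, rowSumNe, Pi.mul_apply]
  norm_num [hs.neg_pow, ht.neg_pow]
  ring

lemma two_mul_half_pow_lt_three_halves_pow {n : ℕ} (hn : n ≠ 0) :
    2 * (1 / 2 : ℝ) ^ n < (3 / 2) ^ n := by
  have h3 : (3 : ℝ) ≤ 3 ^ n := le_self_pow₀ (by norm_num) hn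
  rw [show (3 / 2 : ℝ) = 3 * (1 / 2) by norm_num, mul_pow]
  exact mul_lt_mul_of_pos_right (by linarith) (by positivity)

lemma chromaticX_three_halves_neg {s t : ℕ} (hs : Odd s) (ht : Odd t) :
    chromaticX s t (3 / 2 : ℝ) < 0 := by
  rw [chromaticX_three_halves hs ht]
  have hs' := two_mul_half_pow_lt_three_halves_pow hs.pos.ne'
  have ht' := two_mul_half_pow_lt_three_halves_pow ht.pos.ne'
  exact mul_neg_of_pos_of_neg (mul_pos_of_neg_of_neg (by norm_num) (by linarith)) (by linarith)

lemma chromaticX_two {s t : ℕ} (hs : s ≠ 0) (ht : t ≠ 0) : chromaticX s t (2 : ℝ) = 0 := by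
  norm_num [chromaticX, neNeSum, pairSum, rowSumSame, rowSumNe, hs, ht]

lemma eval_two_derivative_chromaticX {s t : ℕ} (hs : 3 ≤ s) (ht : 3 ≤ t) (hso : Odd s)
    (hto : Odd t) : (derivative (chromaticX s t (X : ℝ[X]))).eval 2 = -2 := by
  have hs1 : s - 1 ≠ 0 := by omega
  have ht1 : t - 1 ≠ 0 := by omega
  norm_num [chromaticX, neNeSum, pairSum, rowSumSame, rowSumNe, derivative_pow,
    hso.neg_one_pow, hto.neg_one_pow, hs1, ht1, show s ≠ 0 by omega, show t ≠ 0 by omega]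
  ring

lemma exists_mem_Ioo_pos_of_hasDerivAt_neg {f : ℝ → ℝ} {a b f' : ℝ} (hf : HasDerivAt f f' a)
    (hf' : f' < 0) (ha : f a = 0) (hb : b < a) : ∃ x ∈ Set.Ioo b a, 0 < f x := by
  have hsign := eventually_nhdsWithin_sign_eq_of_deriv_neg (hf.deriv ▸ hf') ha
  obtain ⟨x, hx, hfx⟩ :=
    (Filter.Eventually.and (Ioo_mem_nhdsLT hb) (nhdsWithin_le_nhds hsign)).exists
  refine ⟨x, hx, ?_⟩
  rwa [sign_pos (sub_pos.2 hx.2), sign_eq_one_iff] at hfx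

/-- For all odd `s, t ≥ 3`, the chromatic polynomial of `X(s,t)` has a real root strictly
between `1` and `2`.  (Together with 3-connectivity and non-bipartiteness of `X(s,t)`, this
refutes Jackson's conjecture.) -/
theorem graphX_has_chromatic_root_between_one_and_two (s t : ℕ) (hs : 3 ≤ s) (ht : 3 ≤ t)
    (hsodd : Odd s) (htodd : Odd t)
    (P : Polynomial ℝ) (hP : IsChromaticPolynomial (graphX s t) P) :
    ∃ x : ℝ, 1 < x ∧ x < 2 ∧ P.eval x = 0 := by
  obtain rfl := hP.eq_chromaticX
  have hzero : (chromaticX s t (X : ℝ[X])).eval 2 = 0 := by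
    rw [eval_chromaticX, chromaticX_two (by omega) (by omega)]
  have hderiv : (derivative (chromaticX s t (X : ℝ[X]))).eval 2 < 0 := by
    rw [eval_two_derivative_chromaticX hs ht hsodd htodd]
    norm_num
  obtain ⟨y, ⟨hy₁, hy₂⟩, hpos⟩ := exists_mem_Ioo_pos_of_hasDerivAt_neg
    (Polynomial.hasDerivAt _ 2) hderiv hzero (by norm_num : (3 / 2 : ℝ) < 2)
  have hneg : (chromaticX s t (X : ℝ[X])).eval (3 / 2) < 0 := by
    rw [eval_chromaticX]
    exact chromaticX_three_halves_neg hsodd htodd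
  obtain ⟨x, hx, hroot⟩ :=
    intermediate_value_Ioo hy₁.le (Polynomial.continuous _).continuousOn ⟨hneg, hpos⟩
  exact ⟨x, by linarith [hx.1], by linarith [hx.2], hroot⟩
end

section
/- If G is a finite loopless graph (simple graph) with n vertices, then its chromatic polynomial P(G, x) is non-zero with sign (-1)^n for every real x ∈ (-∞, 0); that is, (-1)^n P(G, x) > 0 for all x < 0. -/
open Polynomial

theorem Nat.card_subtype_eq_card_and_add_card_and_not {α : Type*} [Finite α] (p q : α → Prop) :
    Nat.card {a // p a} = Nat.card {a // p a ∧ q a} + Nat.card {a // p a ∧ ¬q a} := by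
  classical
  rw [← Nat.card_sum]
  exact Nat.card_congr <| (Equiv.sumCompl fun a : {a // p a} => q a).symm.trans <|
    (Equiv.subtypeSubtypeEquivSubtypeInter p q).sumCongr
      (Equiv.subtypeSubtypeEquivSubtypeInter p (¬q ·))

namespace SimpleGraph

variable {V α : Type*}

def IsProperColoring (G : SimpleGraph V) (f : V → α) : Prop :=
  ∀ a b, G.Adj a b → f a ≠ f b

section Contraction

variable [DecidableEq V] {u v : V}

def collapseTo (huv : u ≠ v) (w : V) : {w : V // w ≠ v} :=
  if hw : w = v then ⟨u, huv⟩ else ⟨w, hw⟩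

theorem collapseTo_val (huv : u ≠ v) (w : {w : V // w ≠ v}) : collapseTo huv w = w := by
  simp [collapseTo, w.2]

theorem collapseTo_left (huv : u ≠ v) : collapseTo huv u = collapseTo huv v := by
  simp [collapseTo, huv]

theorem collapseTo_eq_collapseTo_iff (huv : u ≠ v) {x y : V} (hxy : x ≠ y) :
    collapseTo huv x = collapseTo huv y ↔ s(x, y) = s(u, v) := by
  by_cases hx : x = v <;> by_cases hy : y = v <;> simp [collapseTo, hx, hy, hxy] <;>
    grind

/-- `SimpleGraph.map` drops the loop that the edge `uv` itself would become. -/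
def contractEdge (G : SimpleGraph V) (huv : u ≠ v) : SimpleGraph {w : V // w ≠ v} :=
  G.map (collapseTo huv)

theorem isProperColoring_contractEdge_iff (G : SimpleGraph V) (huv : u ≠ v)
    (g : {w : V // w ≠ v} → α) :
    (G.contractEdge huv).IsProperColoring g ↔
      (G.deleteEdges {s(u, v)}).IsProperColoring (g ∘ collapseTo huv) := by
  constructor
  · intro hg x y hxy
    rw [deleteEdges_adj, Set.mem_singleton_iff] at hxy
    exact hg _ _
      ⟨(collapseTo_eq_collapseTo_iff huv hxy.1.ne).not.mpr hxy.2, x, y, hxy.1, rfl, rfl⟩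
  · rintro hg _ _ ⟨hne, x, y, hxy, rfl, rfl⟩
    exact hg x y <| (deleteEdges_adj ..).mpr
      ⟨hxy, (collapseTo_eq_collapseTo_iff huv hxy.ne).not.mp hne⟩

theorem isProperColoring_deleteEdges_and_ne_iff {G : SimpleGraph V} (huv : G.Adj u v)
    (f : V → α) :
    (G.deleteEdges {s(u, v)}).IsProperColoring f ∧ f u ≠ f v ↔ G.IsProperColoring f := by
  constructor
  · rintro ⟨hf, hfuv⟩ a b hab
    by_cases he : s(a, b) = s(u, v)
    · rcases Sym2.eq_iff.mp he with ⟨rfl, rfl⟩ | ⟨rfl, rfl⟩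
      exacts [hfuv, hfuv.symm]
    · exact hf a b <| (deleteEdges_adj ..).mpr ⟨hab, he⟩
  · exact fun hf => ⟨fun a b hab => hf a b ((deleteEdges_adj ..).mp hab).1, hf u v huv⟩

theorem comp_val_comp_collapseTo {huv : u ≠ v} {f : V → α} (hf : f u = f v) :
    (f ∘ Subtype.val) ∘ collapseTo huv = f := by
  ext w
  by_cases hw : w = v
  · subst hw; simp [collapseTo, hf]
  · simp [collapseTo, hw]

def properColoringsEquivContractEdge (G : SimpleGraph V) (huv : u ≠ v) :
    {f : V → α // (G.deleteEdges {s(u, v)}).IsProperColoring f ∧ f u = f v} ≃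
      {g : {w : V // w ≠ v} → α // (G.contractEdge huv).IsProperColoring g} where
  toFun f := ⟨f.1 ∘ Subtype.val, by
    rw [isProperColoring_contractEdge_iff, comp_val_comp_collapseTo f.2.2]; exact f.2.1⟩
  invFun g := ⟨g.1 ∘ collapseTo huv,
    (isProperColoring_contractEdge_iff G huv g.1).mp g.2, congrArg g.1 (collapseTo_left huv)⟩
  left_inv f := Subtype.ext (comp_val_comp_collapseTo f.2.2)
  right_inv g := Subtype.ext <| funext fun w => congrArg g.1 (collapseTo_val huv w)

end Contraction

end SimpleGraph

open SimpleGraph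

theorem numColorings_deleteEdges_eq_add {V : Type} [Fintype V] [DecidableEq V]
    {G : SimpleGraph V} {u v : V} (huv : G.Adj u v) (k : ℕ) :
    numColorings (G.deleteEdges {s(u, v)}) k =
      numColorings G k + numColorings (G.contractEdge huv.ne) k := by
  let Gd := G.deleteEdges {s(u, v)}
  calc numColorings Gd k
      = Nat.card {f : V → Fin k // Gd.IsProperColoring f ∧ f u ≠ f v} +
        Nat.card {f : V → Fin k // Gd.IsProperColoring f ∧ f u = f v} := by
        rw [add_comm]; exact Nat.card_subtype_eq_card_and_add_card_and_not _ _
    _ = _ := by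
        rw [Nat.card_congr (Equiv.subtypeEquivRight (isProperColoring_deleteEdges_and_ne_iff huv)),
          Nat.card_congr (G.properColoringsEquivContractEdge huv.ne)]
        rfl

theorem isChromaticPolynomial_bot (V : Type) [Fintype V] :
    IsChromaticPolynomial (⊥ : SimpleGraph V) (X ^ Fintype.card V) := by
  intro k
  simp [numColorings, Nat.card_fun]

theorem isChromaticPolynomial_deleteEdges_sub_contractEdge {V : Type} [Fintype V] [DecidableEq V]
    {G : SimpleGraph V} {u v : V} (huv : G.Adj u v) {P Q : ℝ[X]}
    (hP : IsChromaticPolynomial (G.deleteEdges {s(u, v)}) P)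
    (hQ : IsChromaticPolynomial (G.contractEdge huv.ne) Q) :
    IsChromaticPolynomial G (P - Q) := by
  intro k
  rw [eval_sub, hP k, hQ k, numColorings_deleteEdges_eq_add huv, Nat.cast_add, add_sub_cancel_right]

theorem IsChromaticPolynomial.unique {V : Type} [Fintype V] {G : SimpleGraph V} {P Q : ℝ[X]}
    (hP : IsChromaticPolynomial G P) (hQ : IsChromaticPolynomial G Q) : P = Q := by
  refine eq_of_infinite_eval_eq P Q <| (Set.infinite_range_of_injective Nat.cast_injective).mono ?_
  rintro _ ⟨k, rfl⟩
  exact (hP k).trans (hQ k).symm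

theorem exists_isChromaticPolynomial_neg_one_pow_mul_eval_pos (n : ℕ) :
    ∀ (V : Type) [Fintype V], Fintype.card V = n → ∀ G : SimpleGraph V,
      ∃ P : ℝ[X], IsChromaticPolynomial G P ∧
        ∀ x : ℝ, x < 0 → 0 < (-1) ^ n * P.eval x := by
  induction n using Nat.strong_induction_on with
  | _ n ihn =>
  intro V _ hV G
  classical
  induction G using WellFoundedLT.induction with
  | _ G ihG =>
  by_cases hG : G = ⊥
  · subst hG
    refine ⟨X ^ n, hV ▸ isChromaticPolynomial_bot V, fun x hx => ?_⟩
    rw [eval_pow, eval_X, ← mul_pow, neg_one_mul]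
    exact pow_pos (neg_pos.mpr hx) n
  obtain ⟨e, he⟩ := edgeSet_nonempty.mpr hG
  induction e using Sym2.ind with
  | _ u v =>
  obtain ⟨m, rfl⟩ : ∃ m, n = m + 1 :=
    Nat.exists_eq_add_one.mpr (hV ▸ Fintype.card_pos_iff.mpr ⟨u⟩)
  have hlt : G.deleteEdges {s(u, v)} < G :=
    (deleteEdges_le _).lt_of_ne fun h => by simpa [he] using congrArg (s(u, v) ∈ ·.edgeSet) h
  have hcard : Fintype.card {w : V // w ≠ v} = m := by
    rw [Fintype.card_subtype_compl, Fintype.card_subtype_eq, hV, Nat.add_sub_cancel]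
  obtain ⟨P, hP, hPsign⟩ := ihG _ hlt
  -- the contraction has fewer vertices, though not necessarily fewer edges
  obtain ⟨Q, hQ, hQsign⟩ := ihn m m.lt_succ_self _ hcard (G.contractEdge (G.ne_of_adj he))
  refine ⟨P - Q, isChromaticPolynomial_deleteEdges_sub_contractEdge he hP hQ, fun x hx => ?_⟩
  have hexpand : (-1) ^ (m + 1) * (P - Q).eval x =
      (-1) ^ (m + 1) * P.eval x + (-1) ^ m * Q.eval x := by
    rw [eval_sub, pow_succ]; ring
  linarith [hPsign x hx, hQsign x hx]

/-- If `G` is a finite loopless (simple) graph with `n` vertices, then its chromatic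
polynomial is non-zero with sign `(-1)^n` for every real `x < 0`. -/
theorem chromaticPolynomial_sign_neg {V : Type} [Fintype V] (G : SimpleGraph V)
    (P : Polynomial ℝ) (hP : IsChromaticPolynomial G P) :
    ∀ x : ℝ, x < 0 → 0 < (-1 : ℝ) ^ (Fintype.card V) * P.eval x := by
  obtain ⟨Q, hQ, hQsign⟩ := exists_isChromaticPolynomial_neg_one_pow_mul_eval_pos _ V rfl G
  rwa [hP.unique hQ]
end
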